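/- Let G be a beer graph with beer-store set B and let s be a vertex. (i) For every vertex v ∈ B, dist_B(s,v) = dist(s,v). (ii) For every vertex v ∉ B, dist_B(s,v) = ⨅ over all vertices u adjacent to v of ( dist_B(s,u) + ω(u,v) ), the infimum taken in ℝ≥0∞. -/

import Mathlib

open scoped ENNReal

/-- The weight of a walk: the sum, with multiplicity, of the weights of its edges. -/
noncomputable def walkWeight {V : Type*} (ω : V → V → ℝ≥0∞) {G : SimpleGraph V}
    {u v : V} (p : G.Walk u v) : ℝ≥0∞ :=
  (p.darts.map fun d => ω d.toProd.1 d.toProd.2).sum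

/-- The (weighted) distance: the infimum in ℝ≥0∞ of the weights of all walks. -/
noncomputable def gDist {V : Type*} (G : SimpleGraph V) (ω : V → V → ℝ≥0∞) (u v : V) : ℝ≥0∞ :=
  ⨅ p : G.Walk u v, walkWeight ω p

/-- The beer distance: the infimum in ℝ≥0∞ of the weights of all walks visiting
a vertex of `B`. -/
noncomputable def beerDist {V : Type*} (G : SimpleGraph V) (ω : V → V → ℝ≥0∞)
    (B : Set V) (u v : V) : ℝ≥0∞ :=
  ⨅ (p : G.Walk u v) (_ : ∃ b ∈ B, b ∈ p.support), walkWeight ω p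

/-!
A beer walk ending at a beer store is just a walk, which gives (i). A beer walk ending at
`v ∉ B` has a last edge `u → v`, and its beer store lies on the part before it, which is a
beer walk to `u`; conversely a beer walk to a neighbour `u` of `v` extends by the edge `u → v`.
This gives the two inequalities of (ii).
-/

namespace SimpleGraph.Walk

variable {V : Type*} {G : SimpleGraph V} {u v b : V}

lemma not_nil_of_mem_support_of_ne {p : G.Walk u v} (hb : b ∈ p.support) (hbv : b ≠ v) :
    ¬p.Nil := by
  intro hp
  rw [nil_iff_support_eq.mp hp, List.mem_singleton] at hb
  exact hbv (hb.trans hp.eq)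

lemma mem_support_dropLast_of_ne {p : G.Walk u v} (hb : b ∈ p.support) (hbv : b ≠ v) :
    b ∈ p.dropLast.support := by
  rw [← support_dropLast_concat (not_nil_of_mem_support_of_ne hb hbv), List.mem_append,
    List.mem_singleton] at hb
  exact hb.resolve_right hbv

end SimpleGraph.Walk

section WalkWeight

variable {V : Type*} (ω : V → V → ℝ≥0∞) {G : SimpleGraph V} {u v w : V}

lemma walkWeight_append (p : G.Walk u v) (q : G.Walk v w) :
    walkWeight ω (p.append q) = walkWeight ω p + walkWeight ω q := by
  simp [walkWeight, SimpleGraph.Walk.darts_append]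

lemma walkWeight_concat (p : G.Walk u v) (h : G.Adj v w) :
    walkWeight ω (p.concat h) = walkWeight ω p + ω v w := by
  rw [SimpleGraph.Walk.concat_eq_append, walkWeight_append]
  simp [walkWeight]

lemma walkWeight_dropLast_add {p : G.Walk u v} (hp : ¬p.Nil) :
    walkWeight ω p.dropLast + ω p.penultimate v = walkWeight ω p := by
  rw [← walkWeight_concat ω _ (p.adj_penultimate hp), SimpleGraph.Walk.concat_dropLast]

end WalkWeight

section BeerDist

variable {V : Type*} (G : SimpleGraph V) (ω : V → V → ℝ≥0∞) (B : Set V) {s u v : V}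

lemma beerDist_eq_gDist_of_mem (hv : v ∈ B) : beerDist G ω B s v = gDist G ω s v :=
  le_antisymm (le_iInf fun p => iInf₂_le p ⟨v, hv, p.end_mem_support⟩)
    (le_iInf₂ fun p _ => iInf_le _ p)

lemma beerDist_le_add (h : G.Adj u v) : beerDist G ω B s v ≤ beerDist G ω B s u + ω u v := by
  simp only [beerDist, ENNReal.iInf_add]
  refine le_iInf₂ fun p ⟨b, hb, hbp⟩ => ?_
  calc beerDist G ω B s v
      ≤ walkWeight ω (p.concat h) :=
        iInf₂_le _ ⟨b, hb, p.support_subset_support_concat h hbp⟩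
    _ = walkWeight ω p + ω u v := walkWeight_concat ω p h

lemma iInf_adj_le_beerDist (hv : v ∉ B) :
    ⨅ (u : V) (_ : G.Adj u v), beerDist G ω B s u + ω u v ≤ beerDist G ω B s v := by
  refine le_iInf₂ fun p ⟨b, hb, hbp⟩ => ?_
  have hbv : b ≠ v := fun h => hv (h ▸ hb)
  have hp := p.not_nil_of_mem_support_of_ne hbp hbv
  calc ⨅ (u : V) (_ : G.Adj u v), beerDist G ω B s u + ω u v
      ≤ beerDist G ω B s p.penultimate + ω p.penultimate v :=
        iInf₂_le p.penultimate (p.adj_penultimate hp)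
    _ ≤ walkWeight ω p.dropLast + ω p.penultimate v :=
        add_le_add_left (iInf₂_le _ ⟨b, hb, p.mem_support_dropLast_of_ne hbp hbv⟩) _
    _ = walkWeight ω p := walkWeight_dropLast_add ω hp

lemma beerDist_eq_iInf_adj (hv : v ∉ B) :
    beerDist G ω B s v = ⨅ (u : V) (_ : G.Adj u v), beerDist G ω B s u + ω u v :=
  le_antisymm (le_iInf₂ fun _ h => beerDist_le_add G ω B h) (iInf_adj_le_beerDist G ω B hv)

end BeerDist

theorem beerDist_dijkstra_recurrence_general {V : Type*}
    (G : SimpleGraph V) (ω : V → V → ℝ≥0∞) (B : Set V)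
    (s v : V) :
    (v ∈ B → beerDist G ω B s v = gDist G ω s v) ∧
    (v ∉ B → beerDist G ω B s v =
      ⨅ (u : V) (_ : G.Adj u v), beerDist G ω B s u + ω u v) :=
  ⟨beerDist_eq_gDist_of_mem G ω B, beerDist_eq_iInf_adj G ω B⟩

/-- (i) For v ∈ B, the beer distance from s to v equals the distance.
(ii) For v ∉ B, the beer distance from s to v is the infimum over neighbours u of v
of dist_B(s,u) + ω(u,v). -/
theorem beerDist_dijkstra_recurrence {V : Type*} [Fintype V] [DecidableEq V]
    (G : SimpleGraph V) (ω : V → V → ℝ≥0∞) (B : Set V)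
    (hsymm : ∀ a b, ω a b = ω b a)
    (hpos : ∀ a b, G.Adj a b → 0 < ω a b ∧ ω a b < ⊤)
    (s v : V) :
    (v ∈ B → beerDist G ω B s v = gDist G ω s v) ∧
    (v ∉ B → beerDist G ω B s v =
      ⨅ (u : V) (_ : G.Adj u v), beerDist G ω B s u + ω u v) :=
  beerDist_dijkstra_recurrence_general G ω B s v
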